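/- Let F_1,…,F_r be nonempty subsets of [n] with ⋃ F_i = [n], and suppose the intersection graph on {1,…,r} with edges {i,j} when F_i ∩ F_j ≠ ∅ is connected. Choose a spanning tree with edges e_1,…,e_{r-1}, where e_k = {i_k, j_k}, and pick l_k ∈ F_{i_k} ∩ F_{j_k}. Let z = x_{l_1} ⋯ x_{l_{r-1}} and I = P_{F_1} ⋯ P_{F_r}. Then z ∉ I and (I : z) = (x_1,…,x_n). -/

import Mathlib

/-!
Each `P_{F_i}` lies in the maximal ideal `m = (x_1, …, x_n)`, so `I ⊆ m ^ r`, whereas `z` is a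
monomial of degree `r - 1`; hence `z ∉ I`. As `m` is maximal, `(I : z) = m` as soon as
`x_t z ∈ I` for every `t`. Pick `u` with `t ∈ F_u` and send every vertex `v ≠ u` to the edge
joining it to a neighbour closer to `u`: distances make this injective, hence a bijection onto
the `r - 1` edges. Then `x_t z = x_t ∏_{v ≠ u} x_{l(v)}` with `x_t ∈ P_{F_u}` and
`x_{l(v)} ∈ P_{F_v}`, so it lies in `I`.
-/

open MvPolynomial

/-- The monomial prime ideal `P_F = (x_i : i ∈ F)`. -/
noncomputable def PF {K : Type} [Field K] {n : ℕ} (F : Finset (Fin n)) :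
    Ideal (MvPolynomial (Fin n) K) :=
  Ideal.span ((fun i => (X i : MvPolynomial (Fin n) K)) '' ↑F)

namespace MvPolynomial

theorem prod_X_mem_pow_idealOfVars_iff {σ R ι : Type*} [CommSemiring R] [Nontrivial R]
    [Fintype ι] (f : ι → σ) (m : ℕ) :
    ∏ k, (X (f k) : MvPolynomial σ R) ∈ idealOfVars σ R ^ m ↔ m ≤ Fintype.card ι := by
  simp only [X, ← monomial_sum_one, monomial_mem_pow_idealOfVars_iff _ _ one_ne_zero, map_sum,
    Finsupp.degree_single, Finset.sum_const, Finset.card_univ, smul_eq_mul, mul_one]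

theorem isMaximal_idealOfVars (σ K : Type*) [Field K] : (idealOfVars σ K).IsMaximal := by
  have : idealOfVars σ K = RingHom.ker (constantCoeff (σ := σ) (R := K)) := by
    ext p
    rw [← pow_one (idealOfVars σ K), mem_pow_idealOfVars_iff', RingHom.mem_ker]
    simp [Finsupp.degree_eq_zero_iff, constantCoeff_eq]
  rw [this]
  exact RingHom.ker_isMaximal_of_surjective _ fun c => ⟨C c, constantCoeff_C _ _⟩

end MvPolynomial

namespace SimpleGraph

variable {V : Type*} {G : SimpleGraph V}

theorem Connected.exists_adj_dist_add_one (hG : G.Connected) {u v : V} (hv : v ≠ u) :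
    ∃ w, G.Adj v w ∧ G.dist u w + 1 = G.dist u v := by
  obtain ⟨p, hp⟩ := hG.exists_walk_length_eq_dist v u
  cases p with
  | nil => exact absurd rfl hv
  | @cons _ w _ hadj q =>
    refine ⟨w, hadj, ?_⟩
    have hq : G.dist w u ≤ q.length := G.dist_le q
    have htri : G.dist v u ≤ G.dist v w + G.dist w u := hG.dist_triangle
    rw [dist_eq_one_iff_adj.mpr hadj] at htri
    rw [Walk.length_cons] at hp
    rw [dist_comm, dist_comm (u := u)]
    omega

theorem Connected.exists_injective_mem_edge (hG : G.Connected) (u : V) :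
    ∃ f : {v // v ≠ u} → G.edgeSet, Function.Injective f ∧ ∀ v, (v : V) ∈ (f v : Sym2 V) := by
  choose p hadj hdist using fun v : {v // v ≠ u} => hG.exists_adj_dist_add_one v.2
  refine ⟨fun v => ⟨s(v, p v), hadj v⟩, fun v₁ v₂ h => ?_, fun v => Sym2.mem_mk_left _ _⟩
  have h' : s((v₁ : V), p v₁) = s((v₂ : V), p v₂) := congrArg Subtype.val h
  rcases Sym2.eq_iff.mp h' with ⟨h, -⟩ | ⟨h₁, h₂⟩
  · exact Subtype.ext h
  · have h1 := hdist v₁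
    have h2 := hdist v₂
    rw [h₂] at h1
    rw [← h₁] at h2
    omega

theorem exists_eq_of_mem_edgeSet_fromRel {ι : Type*} (e : ι → V × V) {d : Sym2 V}
    (hd : d ∈ (fromRel fun i j => ∃ k, e k = (i, j)).edgeSet) :
    ∃ k, s((e k).1, (e k).2) = d := by
  induction d using Sym2.ind with
  | h v w =>
    rw [mem_edgeSet, fromRel_adj] at hd
    obtain ⟨-, ⟨k, hk⟩ | ⟨k, hk⟩⟩ := hd
    · exact ⟨k, by rw [hk]⟩
    · exact ⟨k, by rw [hk, Sym2.eq_swap]⟩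

theorem exists_equiv_mem_of_connected_fromRel [Fintype V] [DecidableEq V] {ι : Type*}
    [Fintype ι] (e : ι → V × V) (hG : (fromRel fun i j => ∃ k, e k = (i, j)).Connected)
    (hcard : Fintype.card ι = Fintype.card V - 1) (u : V) :
    ∃ σ : {v // v ≠ u} ≃ ι,
      ∀ v : {v // v ≠ u}, (v : V) = (e (σ v)).1 ∨ (v : V) = (e (σ v)).2 := by
  obtain ⟨f, hf, hmem⟩ := hG.exists_injective_mem_edge u
  choose k hk using fun d : (fromRel fun i j => ∃ k, e k = (i, j)).edgeSet =>
    exists_eq_of_mem_edgeSet_fromRel e d.2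
  have hinj : Function.Injective (k ∘ f) := fun a b h => by
    rw [Function.comp_apply, Function.comp_apply] at h
    exact hf (Subtype.ext (by rw [← hk (f a), ← hk (f b), h]))
  have hbij : Function.Bijective (k ∘ f) :=
    (Fintype.bijective_iff_injective_and_card _).mpr ⟨hinj, by simp [hcard]⟩
  refine ⟨Equiv.ofBijective _ hbij, fun v => Sym2.mem_iff.mp ?_⟩
  simpa [hk] using hmem v

end SimpleGraph

theorem Ideal.colon_span_singleton_eq_of_isMaximal {R : Type*} [CommRing R] {I m : Ideal R}
    {z : R} (hm : m.IsMaximal) (hz : z ∉ I) (h : m ≤ I.colon (Ideal.span {z} : Set R)) :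
    I.colon (Ideal.span {z} : Set R) = m := by
  refine (hm.eq_of_le ((Ideal.ne_top_iff_one _).mpr fun h1 => hz ?_) h).symm
  simpa using Ideal.mem_colon_span_singleton.mp h1

section PF

variable {K : Type} [Field K] {n : ℕ}

theorem X_mem_PF {F : Finset (Fin n)} {i : Fin n} (hi : i ∈ F) :
    (X i : MvPolynomial (Fin n) K) ∈ PF F :=
  Ideal.subset_span ⟨i, hi, rfl⟩

theorem prod_PF_le_pow_idealOfVars {ι : Type*} [Fintype ι] (F : ι → Finset (Fin n)) :
    ∏ i, PF (K := K) (F i) ≤ idealOfVars (Fin n) K ^ Fintype.card ι :=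
  calc ∏ i, PF (K := K) (F i) ≤ ∏ _i : ι, idealOfVars (Fin n) K :=
        Finset.prod_le_prod' fun _ _ => Ideal.span_mono (Set.image_subset_range _ _)
    _ = idealOfVars (Fin n) K ^ Fintype.card ι := by rw [Finset.prod_const, Finset.card_univ]

end PF

theorem stmt8_general {K : Type} [Field K] {n r : ℕ} (hr : 0 < r)
    (F : Fin r → Finset (Fin n))
    (hcover : Finset.univ.biUnion F = Finset.univ)
    (e : Fin (r - 1) → Fin r × Fin r)
    (T : SimpleGraph (Fin r))
    (hT : T = SimpleGraph.fromRel fun i j => ∃ k, e k = (i, j))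
    (hTconn : T.Connected)
    (l : Fin (r - 1) → Fin n) (hl : ∀ k, l k ∈ F (e k).1 ∩ F (e k).2) :
    (∏ k, X (l k) : MvPolynomial (Fin n) K) ∉ ∏ i, PF (K := K) (F i) ∧
      (∏ i, PF (K := K) (F i)).colon
          ((Ideal.span {∏ k, X (l k)} : Ideal (MvPolynomial (Fin n) K)) :
            Set (MvPolynomial (Fin n) K)) =
        Ideal.span (Set.range (X : Fin n → MvPolynomial (Fin n) K)) := by
  classical
  subst hT
  have hz : (∏ k, X (l k) : MvPolynomial (Fin n) K) ∉ ∏ i, PF (K := K) (F i) := fun h => by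
    have hdeg := (prod_X_mem_pow_idealOfVars_iff l r).mp
      (by simpa using prod_PF_le_pow_idealOfVars F h)
    simp only [Fintype.card_fin] at hdeg
    omega
  refine ⟨hz, Ideal.colon_span_singleton_eq_of_isMaximal (isMaximal_idealOfVars _ _) hz ?_⟩
  refine Ideal.span_le.mpr (Set.range_subset_iff.mpr fun t => Ideal.mem_colon_span_singleton.mpr ?_)
  obtain ⟨u, -, htu⟩ := Finset.mem_biUnion.mp (hcover ▸ Finset.mem_univ t)
  obtain ⟨σ, hσ⟩ := SimpleGraph.exists_equiv_mem_of_connected_fromRel e hTconn (by simp) u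
  rw [Fintype.prod_eq_mul_prod_subtype_ne _ u, ← σ.prod_comp]
  refine Ideal.mul_mem_mul (X_mem_PF htu) (Ideal.prod_mem_prod fun v _ => X_mem_PF ?_)
  rcases hσ v with h | h <;> rw [h]
  exacts [(Finset.mem_inter.mp (hl _)).1, (Finset.mem_inter.mp (hl _)).2]

/-- If the intersection graph of `F_1, …, F_r` (with `⋃ F_i = [n]`) has a spanning tree with
edges `e_1, …, e_{r-1}` and `l_k ∈ F_{i_k} ∩ F_{j_k}` for each edge `e_k = {i_k, j_k}`, then
for `z = x_{l_1} ⋯ x_{l_{r-1}}` and `I = P_{F_1} ⋯ P_{F_r}` we have `z ∉ I` and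
`(I : z) = (x_1, …, x_n)`. -/
theorem stmt8 {K : Type} [Field K] {n r : ℕ} (hr : 0 < r)
    (F : Fin r → Finset (Fin n)) (hF : ∀ i, (F i).Nonempty)
    (hcover : Finset.univ.biUnion F = Finset.univ)
    (e : Fin (r - 1) → Fin r × Fin r) (hne : ∀ k, (e k).1 ≠ (e k).2)
    (T : SimpleGraph (Fin r))
    (hT : T = SimpleGraph.fromRel fun i j => ∃ k, e k = (i, j))
    (hTconn : T.Connected) (hTacyc : T.IsAcyclic)
    (l : Fin (r - 1) → Fin n) (hl : ∀ k, l k ∈ F (e k).1 ∩ F (e k).2) :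
    (∏ k, X (l k) : MvPolynomial (Fin n) K) ∉ ∏ i, PF (K := K) (F i) ∧
      (∏ i, PF (K := K) (F i)).colon
          ((Ideal.span {∏ k, X (l k)} : Ideal (MvPolynomial (Fin n) K)) :
            Set (MvPolynomial (Fin n) K)) =
        Ideal.span (Set.range (X : Fin n → MvPolynomial (Fin n) K)) :=
  stmt8_general hr F hcover e T hT hTconn l hl
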